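/- Let K be a commutative ring, R = K⟨x,y⟩/(x², y³, (x+y)⁴), and let J be the two-sided ideal of R generated by x and y. Suppose f = θ₁·xy + θ₂·yx + θ₃·y² + g with θ₁, θ₂, θ₃ ∈ K and g ∈ J³. Then (x + y + f)⁴ − (θ₁ + θ₂ − 2θ₃)·yxyxy ∈ J⁶. -/

import Mathlib

noncomputable section

/-- The relations `x² = 0`, `y³ = 0`, `(x+y)⁴ = 0` on `K⟨x,y⟩`, with `x = ι 0`, `y = ι 1`. -/
inductive Rel7 (K : Type*) [CommRing K] :
    FreeAlgebra K (Fin 2) → FreeAlgebra K (Fin 2) → Prop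
  | xx : Rel7 K (FreeAlgebra.ι K 0 * FreeAlgebra.ι K 0) 0
  | yyy : Rel7 K (FreeAlgebra.ι K 1 * (FreeAlgebra.ι K 1 * FreeAlgebra.ι K 1)) 0
  | pow : Rel7 K ((FreeAlgebra.ι K 0 + FreeAlgebra.ι K 1) ^ 4) 0

/-- The algebra `R(E₇) = K⟨x,y⟩/(x², y³, (x+y)⁴)`. -/
abbrev RE7 (K : Type*) [CommRing K] := RingQuot (Rel7 K)

/-- The image of `x` in `R(E₇)`. -/
def e7x (K : Type*) [CommRing K] : RE7 K :=
  RingQuot.mkRingHom (Rel7 K) (FreeAlgebra.ι K 0)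

/-- The image of `y` in `R(E₇)`. -/
def e7y (K : Type*) [CommRing K] : RE7 K :=
  RingQuot.mkRingHom (Rel7 K) (FreeAlgebra.ι K 1)

/-- The two-sided ideal of `R(E₇)` generated by `x` and `y`, viewed as a `K`-submodule
(so that its powers are available via submodule multiplication). -/
def JE7 (K : Type*) [CommRing K] : Submodule K (RE7 K) :=
  ⊤ * Submodule.span K {e7x K, e7y K} * ⊤

/-! Put `s = x + y` and let `D = powDeriv K s 4`, the derivative of `a ↦ a⁴` at `s`. Since `s ∈ J`
and `f ∈ J²`, `(s + f)⁴ ≡ s⁴ + D f = D f` modulo `J⁶`, and `D g ∈ J⁶`. So only `D` on `xy`, `yx`,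
`y²` matters. A word computation gives `D (xy) = yxyxy`. As `x² = 0`, `xy = xs` and `yx = sx`, and
`D (su) - D (us) = s⁴u - us⁴ = 0`, so `D (yx) = D (xy)`. Finally `xy + yx + y² = s²` and
`D (s²) = 4s⁵ = 0`, so `D (y²) = -2 yxyxy`. -/

section Filtration

variable {K A : Type*} [CommRing K] [Ring A] [Algebra K A] {I : Submodule K A}

lemma mul_mem_pow_add {a b : A} {m n : ℕ} (ha : a ∈ I ^ m) (hb : b ∈ I ^ n) :
    a * b ∈ I ^ (m + n) := by
  rw [pow_add]
  exact Submodule.mul_mem_mul ha hb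

lemma mul_mem_pow_succ {a b : A} {m : ℕ} (ha : a ∈ I ^ m) (hb : b ∈ I) : a * b ∈ I ^ (m + 1) := by
  rw [pow_succ]
  exact Submodule.mul_mem_mul ha hb

lemma mul_mem_sq {a b : A} (ha : a ∈ I) (hb : b ∈ I) : a * b ∈ I ^ 2 := by
  rw [sq]
  exact Submodule.mul_mem_mul ha hb

lemma pow_succ_succ_le_pow_succ {M : Type*} [Monoid M] [Preorder M] [MulLeftMono M] {a : M}
    (h : a * a ≤ a) (n : ℕ) : a ^ (n + 2) ≤ a ^ (n + 1) := by
  rw [pow_succ, pow_succ, mul_assoc]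
  exact mul_le_mul_right h _

lemma Submodule.le_top_mul_mul_top (S : Submodule K A) : S ≤ ⊤ * S * ⊤ :=
  calc S = 1 * S * 1 := by rw [one_mul, mul_one]
    _ ≤ ⊤ * S * ⊤ := by gcongr <;> exact le_top

lemma Submodule.top_mul_mul_top_mul_self_le (S : Submodule K A) :
    (⊤ * S * ⊤) * (⊤ * S * ⊤) ≤ ⊤ * S * ⊤ :=
  calc (⊤ * S * ⊤) * (⊤ * S * ⊤) ≤ ⊤ * S * ⊤ * ⊤ := mul_le_mul_right le_top _
    _ = ⊤ * S * (⊤ * ⊤) := mul_assoc _ _ _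
    _ ≤ ⊤ * S * ⊤ := mul_le_mul_right le_top _

end Filtration

section PowDeriv

variable (K : Type*) {A : Type*} [CommRing K] [Ring A] [Algebra K A]

/-- `powDeriv K b n f = ∑_{i + j = n - 1} bⁱ f bʲ`, the derivative of `a ↦ aⁿ` at `b` along `f`. -/
def powDeriv (b : A) : ℕ → A →ₗ[K] A
  | 0 => 0
  | n + 1 => LinearMap.mulRight K b ∘ₗ powDeriv b n + LinearMap.mulLeft K (b ^ n)

variable {K}

@[simp]
lemma powDeriv_zero_apply (b f : A) : powDeriv K b 0 f = 0 := rfl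

lemma powDeriv_succ_apply (b f : A) (n : ℕ) :
    powDeriv K b (n + 1) f = powDeriv K b n f * b + b ^ n * f := rfl

lemma powDeriv_self_mul_sub_powDeriv_mul_self (b u : A) (n : ℕ) :
    powDeriv K b n (b * u) - powDeriv K b n (u * b) = b ^ n * u - u * b ^ n := by
  induction n with
  | zero => simp
  | succ n ih =>
    rw [powDeriv_succ_apply, powDeriv_succ_apply, add_sub_add_comm, ← sub_mul, ih]
    noncomm_ring

lemma powDeriv_mul_self (b : A) (n : ℕ) : powDeriv K b n (b * b) = n • b ^ (n + 1) := by
  induction n with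
  | zero => simp
  | succ n ih =>
    rw [powDeriv_succ_apply, ih, smul_mul_assoc, ← pow_succ, ← mul_assoc, ← pow_succ, ← pow_succ,
      succ_nsmul]

variable {I : Submodule K A}

lemma powDeriv_mem_pow {b f : A} {k : ℕ} (hb : b ∈ I) (hf : f ∈ I ^ k) (n : ℕ) :
    powDeriv K b (n + 1) f ∈ I ^ (n + k) := by
  induction n with
  | zero => simpa [powDeriv_succ_apply] using hf
  | succ n ih =>
    rw [powDeriv_succ_apply]
    refine add_mem ?_ (mul_mem_pow_add (Submodule.pow_mem_pow I hb _) hf)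
    rw [add_right_comm]
    exact mul_mem_pow_succ ih hb

lemma pow_sub_pow_mem {a b : A} (ha : a ∈ I) (hb : b ∈ I) (hab : a - b ∈ I ^ 2) (n : ℕ) :
    a ^ n - b ^ n ∈ I ^ (n + 1) := by
  induction n with
  | zero => simp
  | succ n ih =>
    have h : a ^ (n + 1) - b ^ (n + 1) = (a ^ n - b ^ n) * b + a ^ n * (a - b) := by noncomm_ring
    rw [h]
    exact add_mem (mul_mem_pow_succ ih hb) (mul_mem_pow_add (Submodule.pow_mem_pow I ha n) hab :)

lemma pow_sub_pow_sub_powDeriv_mem {a b : A} (ha : a ∈ I) (hb : b ∈ I) (hab : a - b ∈ I ^ 2)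
    (n : ℕ) : a ^ n - b ^ n - powDeriv K b n (a - b) ∈ I ^ (n + 2) := by
  induction n with
  | zero => simp
  | succ n ih =>
    have h : a ^ (n + 1) - b ^ (n + 1) - powDeriv K b (n + 1) (a - b) =
        (a ^ n - b ^ n - powDeriv K b n (a - b)) * b + (a ^ n - b ^ n) * (a - b) := by
      rw [powDeriv_succ_apply]
      noncomm_ring
    rw [h]
    exact add_mem (mul_mem_pow_succ ih hb) (mul_mem_pow_add (pow_sub_pow_mem ha hb hab n) hab)

end PowDeriv

section E7

variable (K : Type*) [CommRing K]

lemma e7x_mul_e7x : e7x K * e7x K = 0 := by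
  simpa only [e7x, map_mul, map_zero] using RingQuot.mkRingHom_rel (Rel7.xx (K := K))

lemma e7y_mul_e7y_mul_e7y : e7y K * (e7y K * e7y K) = 0 := by
  simpa only [e7y, map_mul, map_zero] using RingQuot.mkRingHom_rel (Rel7.yyy (K := K))

lemma e7x_add_e7y_pow_four : (e7x K + e7y K) ^ 4 = 0 := by
  simpa only [e7x, e7y, map_pow, map_add, map_zero] using
    RingQuot.mkRingHom_rel (Rel7.pow (K := K))

lemma e7x_mem_JE7 : e7x K ∈ JE7 K :=
  Submodule.le_top_mul_mul_top _ (Submodule.subset_span (by simp))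

lemma e7y_mem_JE7 : e7y K ∈ JE7 K :=
  Submodule.le_top_mul_mul_top _ (Submodule.subset_span (by simp))

lemma powDeriv_e7_xy :
    powDeriv K (e7x K + e7y K) 4 (e7x K * e7y K) = e7y K * e7x K * e7y K * e7x K * e7y K := by
  set x := e7x K
  set y := e7y K
  set s := x + y
  have hxx : x * x = 0 := e7x_mul_e7x K
  have hyyy : y * (y * y) = 0 := e7y_mul_e7y_mul_e7y K
  have hxx' (a : RE7 K) : x * (x * a) = 0 := by rw [← mul_assoc, hxx, zero_mul]
  calc powDeriv K s 4 (x * y) = y * x * y * x * y + x * s ^ 4 + s ^ 4 * x + s ^ 4 * y := by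
        -- both sides agree once the words containing `xx` or `yyy` are deleted
        simp only [s, powDeriv_succ_apply, powDeriv_zero_apply, pow_succ, pow_zero, one_mul,
          mul_add, add_mul, mul_assoc, hxx, hyyy, hxx', mul_zero, zero_mul, add_zero, zero_add]
        abel
    _ = y * x * y * x * y := by
        simp only [s, x, y, e7x_add_e7y_pow_four, mul_zero, zero_mul, add_zero]

lemma powDeriv_e7_yx :
    powDeriv K (e7x K + e7y K) 4 (e7y K * e7x K) = e7y K * e7x K * e7y K * e7x K * e7y K := by
  have hxy : e7x K * e7y K = e7x K * (e7x K + e7y K) := by rw [mul_add, e7x_mul_e7x, zero_add]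
  have hyx : e7y K * e7x K = (e7x K + e7y K) * e7x K := by rw [add_mul, e7x_mul_e7x, zero_add]
  have h := powDeriv_self_mul_sub_powDeriv_mul_self (K := K) (e7x K + e7y K) (e7x K) 4
  rw [e7x_add_e7y_pow_four, zero_mul, mul_zero, sub_zero, sub_eq_zero, ← hyx, ← hxy] at h
  rw [h, powDeriv_e7_xy]

lemma powDeriv_e7_yy :
    powDeriv K (e7x K + e7y K) 4 (e7y K * e7y K) =
      (-2 : K) • (e7y K * e7x K * e7y K * e7x K * e7y K) := by
  have hyy : e7y K * e7y K =
      (e7x K + e7y K) * (e7x K + e7y K) - e7x K * e7y K - e7y K * e7x K := by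
    rw [add_mul, mul_add, mul_add, e7x_mul_e7x]
    abel
  rw [hyy, map_sub, map_sub, powDeriv_mul_self, pow_succ, e7x_add_e7y_pow_four, zero_mul,
    smul_zero, powDeriv_e7_xy, powDeriv_e7_yx]
  module

end E7

/-- In `R(E₇) = K⟨x,y⟩/(x², y³, (x+y)⁴)`, if `f = θ₁·xy + θ₂·yx + θ₃·y² + g` with `g ∈ J³`,
where `J` is the two-sided ideal generated by `x` and `y`, then
`(x + y + f)⁴ − (θ₁ + θ₂ − 2θ₃)·yxyxy ∈ J⁶`. -/
theorem e7_pow_four_congr_mod_J6 (K : Type*) [CommRing K]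
    (θ₁ θ₂ θ₃ : K) (f g : RE7 K) (hg : g ∈ (JE7 K) ^ 3)
    (hf : f = θ₁ • (e7x K * e7y K) + θ₂ • (e7y K * e7x K) + θ₃ • (e7y K * e7y K) + g) :
    (e7x K + e7y K + f) ^ 4
        - (θ₁ + θ₂ - 2 * θ₃) • (e7y K * e7x K * e7y K * e7x K * e7y K) ∈ (JE7 K) ^ 6 := by
  set J := JE7 K
  set s := e7x K + e7y K
  have hJ : J * J ≤ J := Submodule.top_mul_mul_top_mul_self_le _
  have hx := e7x_mem_JE7 K
  have hy := e7y_mem_JE7 K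
  have hs : s ∈ J := add_mem hx hy
  have hf2 : f ∈ J ^ 2 := by
    rw [hf]
    refine add_mem (add_mem (add_mem ?_ ?_) ?_) (pow_succ_succ_le_pow_succ hJ 1 hg)
    · exact (J ^ 2).smul_mem θ₁ (mul_mem_sq hx hy)
    · exact (J ^ 2).smul_mem θ₂ (mul_mem_sq hy hx)
    · exact (J ^ 2).smul_mem θ₃ (mul_mem_sq hy hy)
  have hf1 : f ∈ J := by simpa using pow_succ_succ_le_pow_succ hJ 0 hf2
  have hD : powDeriv K s 4 f =
      (θ₁ + θ₂ - 2 * θ₃) • (e7y K * e7x K * e7y K * e7x K * e7y K) + powDeriv K s 4 g := by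
    rw [hf, map_add, map_add, map_add, map_smul, map_smul, map_smul, powDeriv_e7_xy,
      powDeriv_e7_yx, powDeriv_e7_yy]
    module
  have hexp := pow_sub_pow_sub_powDeriv_mem (add_mem hs hf1) hs (by rwa [add_sub_cancel_left]) 4
  rw [add_sub_cancel_left, e7x_add_e7y_pow_four, hD] at hexp
  have hg6 : powDeriv K s 4 g ∈ J ^ 6 := powDeriv_mem_pow hs hg 3
  convert add_mem hexp hg6 using 1
  abel
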